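/- One-dimensional trigonometric product bound: there exists a constant C such that for all positive integers n, n₁, n₂, n₃, |∫₀¹ sin(nπr) sin(n₁πr) sin(n₂πr) sin(n₃πr) r^{-2} dr| ≤ C min(n, n₁, n₂, n₃). -/

import Mathlib

/-!
Expanding `sin b · sin c · sin d` into four sines reduces the integral to four integrals
`∫₀¹ sin(wr) sin(kr) r⁻² dr`, where `w` is the smallest frequency and `k` is arbitrary; each is
`O(|w|)` uniformly in `k`. On `[0, 1/|k|]` the integrand is bounded by `|w||k|`, using
`|sin t| ≤ |t|` for both factors. On `[1/|k|, 1]` one integrates `sin(kr)` by parts, gaining the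
factor `1/|k|` against `sin(wr)/r²` and its derivative, which are `O(|w|/r)` and `O(|w|/r²)`.
-/

open Real intervalIntegral MeasureTheory Set

lemma integral_inv_sq_of_pos {a b : ℝ} (ha : 0 < a) (hab : a ≤ b) :
    ∫ r in a..b, (r ^ 2)⁻¹ = a⁻¹ - b⁻¹ := by
  have hne : ∀ r ∈ uIcc a b, r ≠ 0 := fun r hr =>
    (ha.trans_le (by rw [uIcc_of_le hab] at hr; exact hr.1)).ne'
  rw [integral_eq_sub_of_hasDerivAt (f := fun r => -r⁻¹)
    (fun r hr => by simpa using (hasDerivAt_inv (hne r hr)).fun_neg)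
    (ContinuousOn.intervalIntegrable (u := fun r => (r ^ 2)⁻¹)
      ((continuousOn_pow 2).inv₀ fun r hr => pow_ne_zero 2 (hne r hr)))]
  ring

lemma abs_sin_mul_le (w r : ℝ) : |sin (w * r)| ≤ |w| * |r| :=
  abs_sin_le_abs.trans (abs_mul w r).le

lemma abs_sin_mul_sin_div_sq_le (w k r : ℝ) :
    |sin (w * r) * sin (k * r) / r ^ 2| ≤ |w| * |k| := by
  rcases eq_or_ne r 0 with rfl | hr
  · simp only [mul_zero, sin_zero, zero_div, abs_zero]
    positivity
  rw [abs_div, abs_mul, abs_pow, div_le_iff₀ (by positivity)]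
  calc |sin (w * r)| * |sin (k * r)| ≤ (|w| * |r|) * (|k| * |r|) :=
        mul_le_mul (abs_sin_mul_le w r) (abs_sin_mul_le k r) (abs_nonneg _) (by positivity)
    _ = |w| * |k| * |r| ^ 2 := by ring

lemma intervalIntegrable_sin_mul_sin_div_sq (w k a b : ℝ) :
    IntervalIntegrable (fun r => sin (w * r) * sin (k * r) / r ^ 2) volume a b :=
  intervalIntegrable_iff.2 <| Measure.integrableOn_of_bounded measure_Ioc_lt_top.ne
    (by fun_prop : Measurable fun r => sin (w * r) * sin (k * r) / r ^ 2).aestronglyMeasurable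
    (M := |w| * |k|) (.of_forall fun r => abs_sin_mul_sin_div_sq_le w k r)

lemma abs_sin_mul_div_sq_le (w : ℝ) {r : ℝ} (hr : 0 < r) : |sin (w * r) / r ^ 2| ≤ |w| / r := by
  calc |sin (w * r) / r ^ 2| = |sin (w * r)| / r ^ 2 := by rw [abs_div, abs_pow, abs_of_pos hr]
    _ ≤ |w| * r / r ^ 2 := by gcongr; simpa [abs_of_pos hr] using abs_sin_mul_le w r
    _ = |w| / r := by field_simp

lemma abs_deriv_sin_mul_div_sq_le (w : ℝ) {r : ℝ} (hr : 0 < r) :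
    |w * cos (w * r) / r ^ 2 - 2 * sin (w * r) / r ^ 3| ≤ 3 * |w| / r ^ 2 := by
  have hcos : |w * cos (w * r) / r ^ 2| ≤ |w| / r ^ 2 := by
    rw [abs_div, abs_mul, abs_pow, abs_of_pos hr]
    gcongr
    exact mul_le_of_le_one_right (abs_nonneg w) (abs_cos_le_one _)
  have hsin : |2 * sin (w * r) / r ^ 3| ≤ 2 * |w| / r ^ 2 := by
    calc |2 * sin (w * r) / r ^ 3| = 2 * (|sin (w * r)| / r ^ 3) := by
          rw [abs_div, abs_mul, abs_pow, abs_of_pos hr, abs_two, mul_div_assoc]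
      _ ≤ 2 * (|w| * r / r ^ 3) := by gcongr; simpa [abs_of_pos hr] using abs_sin_mul_le w r
      _ = 2 * |w| / r ^ 2 := by field_simp
  calc _ ≤ |w * cos (w * r) / r ^ 2| + |2 * sin (w * r) / r ^ 3| := abs_sub _ _
    _ ≤ |w| / r ^ 2 + 2 * |w| / r ^ 2 := add_le_add hcos hsin
    _ = 3 * |w| / r ^ 2 := by ring

lemma abs_neg_cos_mul_div_le (k r : ℝ) : |-cos (k * r) / k| ≤ |k|⁻¹ := by
  rw [abs_div, abs_neg, div_eq_mul_inv]
  exact mul_le_of_le_one_left (by positivity) (abs_cos_le_one _)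

lemma intervalIntegrable_deriv_sin_mul_div_sq (w : ℝ) {a b : ℝ} (ha : 0 < a) (hab : a ≤ b) :
    IntervalIntegrable (fun r => w * cos (w * r) / r ^ 2 - 2 * sin (w * r) / r ^ 3) volume a b := by
  have hdiv_pow : ∀ (f : ℝ → ℝ) (n : ℕ), Continuous f →
      ContinuousOn (fun r => f r / r ^ n) (uIcc a b) := fun f n hf =>
    hf.continuousOn.div (continuousOn_pow n) fun r hr =>
      pow_ne_zero n (ha.trans_le (by rw [uIcc_of_le hab] at hr; exact hr.1)).ne'
  exact ((hdiv_pow _ 2 (by fun_prop)).sub (hdiv_pow _ 3 (by fun_prop))).intervalIntegrable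

lemma abs_integral_deriv_sin_mul_div_sq_mul_cos_le (w : ℝ) {k a b : ℝ} (ha : 0 < a)
    (hab : a ≤ b) :
    |∫ r in a..b, (w * cos (w * r) / r ^ 2 - 2 * sin (w * r) / r ^ 3) * (-cos (k * r) / k)| ≤
      3 * |w| / |k| * (a⁻¹ - b⁻¹) := by
  calc _ ≤ ∫ r in a..b, 3 * |w| / |k| * (r ^ 2)⁻¹ := by
        refine abs_integral_le_integral_abs hab |>.trans <| integral_mono_on hab ?_ ?_ ?_
        · exact ((intervalIntegrable_deriv_sin_mul_div_sq w ha hab).mul_continuousOn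
            (by fun_prop)).abs
        · refine (continuousOn_const.mul
            ((continuousOn_pow 2).inv₀ fun r hr => ?_)).intervalIntegrable
          rw [uIcc_of_le hab] at hr
          exact pow_ne_zero 2 (ha.trans_le hr.1).ne'
        · intro r hr
          have hr0 : 0 < r := ha.trans_le hr.1
          calc _ ≤ 3 * |w| / r ^ 2 * |k|⁻¹ := by
                rw [abs_mul]
                exact mul_le_mul (abs_deriv_sin_mul_div_sq_le w hr0)
                  (abs_neg_cos_mul_div_le k r) (abs_nonneg _) (by positivity)
            _ = 3 * |w| / |k| * (r ^ 2)⁻¹ := by ring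
    _ = 3 * |w| / |k| * (a⁻¹ - b⁻¹) := by
        rw [intervalIntegral.integral_const_mul, integral_inv_sq_of_pos ha hab]

lemma abs_integral_sin_mul_sin_div_sq_le_of_pos (w : ℝ) {k a b : ℝ} (hk : k ≠ 0) (ha : 0 < a)
    (hab : a ≤ b) :
    |∫ r in a..b, sin (w * r) * sin (k * r) / r ^ 2| ≤ 4 * |w| / (|k| * a) := by
  have hpos : ∀ r ∈ uIcc a b, 0 < r := fun r hr =>
    ha.trans_le (by rw [uIcc_of_le hab] at hr; exact hr.1)
  set u : ℝ → ℝ := fun r => sin (w * r) / r ^ 2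
  set u' : ℝ → ℝ := fun r => w * cos (w * r) / r ^ 2 - 2 * sin (w * r) / r ^ 3
  set v : ℝ → ℝ := fun r => -cos (k * r) / k
  have hu : ∀ r ∈ uIcc a b, HasDerivAt u (u' r) r := fun r hr =>
    (((hasDerivAt_id r).const_mul w).sin.div ((hasDerivAt_id r).pow 2)
      (pow_ne_zero 2 (hpos r hr).ne')).congr_deriv
      (by simp only [u', id, Pi.pow_apply]; field_simp [(hpos r hr).ne']; ring)
  have hv : ∀ r ∈ uIcc a b, HasDerivAt v (sin (k * r)) r := fun r _ =>
    ((((hasDerivAt_id r).const_mul k).cos.neg).div_const k).congr_deriv (by field_simp; simp)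
  have hboundary : ∀ r ∈ uIcc a b, |u r * v r| ≤ |w| / r * |k|⁻¹ := fun r hr => by
    rw [abs_mul]
    exact mul_le_mul (abs_sin_mul_div_sq_le w (hpos r hr)) (abs_neg_cos_mul_div_le k r)
      (abs_nonneg _) (by have := hpos r hr; positivity)
  have hfactor : ∫ r in a..b, sin (w * r) * sin (k * r) / r ^ 2 = ∫ r in a..b, u r * sin (k * r) :=
    integral_congr fun r _ => by simp only [u]; ring
  rw [hfactor, intervalIntegral.integral_mul_deriv_eq_deriv_mul hu hv
    (intervalIntegrable_deriv_sin_mul_div_sq w ha hab)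
    ((by fun_prop : Continuous fun r => sin (k * r)).intervalIntegrable a b)]
  have hb := hboundary b right_mem_uIcc
  have ha' := hboundary a left_mem_uIcc
  have hbulk := abs_integral_deriv_sin_mul_div_sq_mul_cos_le w (k := k) ha hab
  have hb0 : 0 < b := ha.trans_le hab
  have hk0 : 0 < |k| := abs_pos.2 hk
  calc _ ≤ |u b * v b| + |u a * v a| + |∫ r in a..b, u' r * v r| :=
        (abs_sub _ _).trans (add_le_add_left (abs_sub _ _) _)
    _ ≤ |w| / b * |k|⁻¹ + |w| / a * |k|⁻¹ + 3 * |w| / |k| * (a⁻¹ - b⁻¹) := by gcongr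
    _ = 4 * |w| / (|k| * a) - 2 * |w| / (|k| * b) := by field_simp; ring
    _ ≤ 4 * |w| / (|k| * a) := sub_le_self _ (by positivity)

lemma abs_integral_sin_mul_sin_div_sq_le (w k : ℝ) :
    |∫ r in (0 : ℝ)..1, sin (w * r) * sin (k * r) / r ^ 2| ≤ 5 * |w| := by
  have hhead : ∀ a, 0 ≤ a →
      |∫ r in (0 : ℝ)..a, sin (w * r) * sin (k * r) / r ^ 2| ≤ |w| * |k| * a := fun a ha => by
    simpa [abs_of_nonneg ha] using norm_integral_le_of_norm_le_const (a := 0) (b := a)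
      fun r _ => (norm_eq_abs _).trans_le (abs_sin_mul_sin_div_sq_le w k r)
  rcases le_or_gt |k| 1 with hk | hk
  · calc _ ≤ |w| * |k| * 1 := hhead 1 zero_le_one
      _ ≤ 5 * |w| := by nlinarith [abs_nonneg w, abs_nonneg k]
  · have hk0 : k ≠ 0 := abs_pos.1 (zero_lt_one.trans hk)
    have ha : 0 < |k|⁻¹ := by positivity
    rw [← integral_add_adjacent_intervals (intervalIntegrable_sin_mul_sin_div_sq w k 0 |k|⁻¹)
      (intervalIntegrable_sin_mul_sin_div_sq w k |k|⁻¹ 1)]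
    calc _ ≤ |w| * |k| * |k|⁻¹ + 4 * |w| / (|k| * |k|⁻¹) :=
          (abs_add_le _ _).trans <| add_le_add (hhead _ ha.le)
            (abs_integral_sin_mul_sin_div_sq_le_of_pos w hk0 ha (inv_le_one_of_one_le₀ hk.le))
      _ = 5 * |w| := by field_simp; ring

lemma sin_mul_sin_mul_sin (x y z : ℝ) :
    sin x * sin y * sin z =
      (sin (x + y - z) + sin (x - y + z) + sin (-x + y + z) - sin (x + y + z)) / 4 := by
  simp only [sin_add, sin_sub, cos_add, cos_sub, sin_neg, cos_neg]
  ring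

lemma abs_integral_sin_four_div_sq_le (w x y z : ℝ) :
    |∫ r in (0 : ℝ)..1, sin (w * r) * sin (x * r) * sin (y * r) * sin (z * r) / r ^ 2| ≤
      5 * |w| := by
  set I : ℝ → ℝ := fun k => ∫ r in (0 : ℝ)..1, sin (w * r) * sin (k * r) / r ^ 2
  have hint : ∀ k, IntervalIntegrable (fun r => sin (w * r) * sin (k * r) / r ^ 2) volume 0 1 :=
    fun k => intervalIntegrable_sin_mul_sin_div_sq w k 0 1
  have hsum : ∫ r in (0 : ℝ)..1, sin (w * r) * sin (x * r) * sin (y * r) * sin (z * r) / r ^ 2 =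
      (I (x + y - z) + I (x - y + z) + I (-x + y + z) - I (x + y + z)) / 4 := by
    simp only [I]
    rw [← integral_add (hint _) (hint _), ← integral_add ((hint _).add (hint _)) (hint _),
      ← integral_sub (((hint _).add (hint _)).add (hint _)) (hint _),
      ← intervalIntegral.integral_div]
    refine integral_congr fun r _ => ?_
    simp only [add_mul, sub_mul, neg_mul]
    rw [mul_assoc (sin (w * r)), mul_assoc (sin (w * r)), sin_mul_sin_mul_sin]
    ring
  have hI := fun k => abs_integral_sin_mul_sin_div_sq_le w k
  rw [hsum, abs_div, abs_of_pos (four_pos : (0 : ℝ) < 4)]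
  calc _ ≤ (|I (x + y - z)| + |I (x - y + z)| + |I (-x + y + z)| + |I (x + y + z)|) / 4 := by
        gcongr
        exact (abs_sub _ _).trans
          (by gcongr; exact (abs_add_le _ _).trans (by gcongr; exact abs_add_le _ _))
    _ ≤ 5 * |w| := by
        linarith [hI (x + y - z), hI (x - y + z), hI (-x + y + z), hI (x + y + z)]

lemma abs_integral_sin_four_div_sq_le_min (w x y z : ℝ) :
    |∫ r in (0 : ℝ)..1, sin (w * r) * sin (x * r) * sin (y * r) * sin (z * r) / r ^ 2| ≤
      5 * min (min |w| |x|) (min |y| |z|) := by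
  simp only [mul_min_of_nonneg _ _ (by norm_num : (0 : ℝ) ≤ 5), le_min_iff]
  refine ⟨⟨abs_integral_sin_four_div_sq_le w x y z, ?_⟩, ?_, ?_⟩
  · simpa only [mul_comm, mul_left_comm, mul_assoc] using abs_integral_sin_four_div_sq_le x w y z
  · simpa only [mul_comm, mul_left_comm, mul_assoc] using abs_integral_sin_four_div_sq_le y w x z
  · simpa only [mul_comm, mul_left_comm, mul_assoc] using abs_integral_sin_four_div_sq_le z w x y

/-- One-dimensional trigonometric product bound: there is a constant `C` such
that for all positive integers `n, n₁, n₂, n₃`,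
`|∫₀¹ sin(nπr) sin(n₁πr) sin(n₂πr) sin(n₃πr) r⁻² dr| ≤ C·min(n,n₁,n₂,n₃)`. -/
theorem trig_product_bound :
    ∃ C : ℝ, 0 < C ∧ ∀ n n₁ n₂ n₃ : ℕ+,
      |∫ r in (0 : ℝ)..1,
          Real.sin ((n : ℝ) * π * r) * Real.sin ((n₁ : ℝ) * π * r) *
            Real.sin ((n₂ : ℝ) * π * r) * Real.sin ((n₃ : ℝ) * π * r) / r ^ 2|
        ≤ C * ((min (min n n₁) (min n₂ n₃) : ℕ+) : ℝ) := by
  refine ⟨5 * π, by positivity, fun n n₁ n₂ n₃ => ?_⟩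
  refine (abs_integral_sin_four_div_sq_le_min _ _ _ _).trans_eq ?_
  have hcoe : ∀ a b : ℕ+, ((min a b : ℕ+) : ℝ) = min (a : ℝ) b := fun a b =>
    (show Monotone (fun m : ℕ+ => (m : ℝ)) from fun _ _ h => by simpa using h).map_min
  simp only [abs_mul, abs_of_pos pi_pos, Nat.abs_cast, ← min_mul_of_nonneg _ _ pi_pos.le, hcoe]
  ring
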